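/- arXiv:2406.12862 — 9 statements merged into one kernel-verified Lean document; each statement's English description precedes it below -/
import Mathlib

section
/- Let X be a nonempty closed shift-invariant subset of the full one-sided shift space Σ² = {0,1}^ℕ with the metric d(x,y) = 0 if x = y and d(x,y) = 1/(k+1) where k = min{n : x_n ≠ y_n} otherwise. If the shift map σ restricted to X is accessible, then σ² restricted to X is accessible. -/
open Set Classical

/-- The one-sided shift map on `Σ² = {0,1}^ℕ`. -/
def shiftMap (x : ℕ → Fin 2) : ℕ → Fin 2 := fun n => x (n + 1)

/-- The metric on `Σ²`: `d(x,y) = 0` if `x = y`, and `d(x,y) = 1/(k+1)` where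
`k = min{n : xₙ ≠ yₙ}` otherwise. -/
noncomputable def shiftDist (x y : ℕ → Fin 2) : ℝ :=
  if x = y then 0 else 1 / ((sInf {n | x n ≠ y n} : ℕ) + 1)

lemma shiftDist_nonneg (x y : ℕ → Fin 2) : 0 ≤ shiftDist x y := by
  unfold shiftDist
  split
  · exact le_refl 0
  · positivity

lemma shift_dist_step (a b : ℕ → Fin 2) (h : shiftDist a b < 1/2) :
    shiftDist (shiftMap a) (shiftMap b) ≤ 2 * shiftDist a b := by
  by_cases hab : a = b
  · subst hab
    simp [shiftDist]
  · have hS : {n | a n ≠ b n}.Nonempty := by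
      rcases Set.eq_empty_or_nonempty {n | a n ≠ b n} with hc | hc
      · exact absurd (funext fun n => by_contra fun hn =>
          (Set.eq_empty_iff_forall_notMem.mp hc n) hn) hab
      · exact hc
    set k := sInf {n | a n ≠ b n} with hk
    have hd : shiftDist a b = 1 / ((k : ℝ) + 1) := by
      rw [shiftDist, if_neg hab]
    have hk2 : 2 ≤ k := by
      by_contra hlt
      push_neg at hlt
      interval_cases k <;> rw [hd] at h <;> norm_num at h
    rw [hd]
    by_cases hab' : shiftMap a = shiftMap b
    · rw [shiftDist, if_pos hab']
      positivity
    · have hS' : {n | shiftMap a n ≠ shiftMap b n}.Nonempty := by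
        rcases Set.eq_empty_or_nonempty {n | shiftMap a n ≠ shiftMap b n} with hc | hc
        · exact absurd (funext fun n => by_contra fun hn =>
            (Set.eq_empty_iff_forall_notMem.mp hc n) hn) hab'
        · exact hc
      set k' := sInf {n | shiftMap a n ≠ shiftMap b n} with hk'
      have hd' : shiftDist (shiftMap a) (shiftMap b) = 1 / ((k' : ℝ) + 1) := by
        rw [shiftDist, if_neg hab']
      have hmem : k' ∈ {n | shiftMap a n ≠ shiftMap b n} := Nat.sInf_mem hS'
      have : a (k' + 1) ≠ b (k' + 1) := hmem
      have hle : k ≤ k' + 1 := Nat.sInf_le this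
      rw [hd']
      have hkpos : (0:ℝ) < k := by positivity
      have h1 : (1:ℝ) / (k' + 1) ≤ 1 / k := by
        apply one_div_le_one_div_of_le hkpos
        exact_mod_cast hle
      have h2 : (1:ℝ) / k ≤ 2 * (1 / (k + 1)) := by
        have hk1 : (0:ℝ) < (k:ℝ) + 1 := by positivity
        have hk2' : (2:ℝ) ≤ (k:ℝ) := by exact_mod_cast hk2
        rw [mul_one_div, div_le_div_iff₀ hkpos hk1]
        nlinarith [hk2']
      linarith

/-- If `X` is a nonempty closed shift-invariant subset of `Σ²` and the shift `σ`
restricted to `X` is accessible, then `σ²` restricted to `X` is accessible. -/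
theorem shiftSq_accessible (X : Set (ℕ → Fin 2)) (hne : X.Nonempty)
    (hcl : IsClosed X) (hinv : ∀ x ∈ X, shiftMap x ∈ X)
    (hacc : ∀ ε > (0:ℝ), ∀ U V : Set (ℕ → Fin 2), IsOpen U → IsOpen V →
      (U ∩ X).Nonempty → (V ∩ X).Nonempty →
      ∃ x ∈ U ∩ X, ∃ y ∈ V ∩ X, ∃ n : ℕ, 1 ≤ n ∧
        shiftDist (shiftMap^[n] x) (shiftMap^[n] y) < ε) :
    ∀ ε > (0:ℝ), ∀ U V : Set (ℕ → Fin 2), IsOpen U → IsOpen V →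
      (U ∩ X).Nonempty → (V ∩ X).Nonempty →
      ∃ x ∈ U ∩ X, ∃ y ∈ V ∩ X, ∃ n : ℕ, 1 ≤ n ∧
        shiftDist ((shiftMap ∘ shiftMap)^[n] x) ((shiftMap ∘ shiftMap)^[n] y) < ε := by
  intro ε hε U V hU hV hUX hVX
  have hε' : (0:ℝ) < min (ε/2) (1/2) := by positivity
  obtain ⟨x, hx, y, hy, n, hn1, hd⟩ := hacc _ hε' U V hU hV hUX hVX
  have hsq : ∀ m (z : ℕ → Fin 2), (shiftMap ∘ shiftMap)^[m] z = shiftMap^[2*m] z := by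
    intro m z
    rw [Function.iterate_mul]
    congr 1
  rcases Nat.even_or_odd n with ⟨m, hm⟩ | ⟨m, hm⟩
  · refine ⟨x, hx, y, hy, m, by omega, ?_⟩
    rw [hsq, hsq, (by omega : 2*m = n)]
    calc shiftDist (shiftMap^[n] x) (shiftMap^[n] y) < min (ε/2) (1/2) := hd
      _ ≤ ε/2 := min_le_left _ _
      _ < ε := by linarith
  · refine ⟨x, hx, y, hy, m + 1, by omega, ?_⟩
    rw [hsq, hsq, (by omega : 2*(m+1) = n + 1),
      Function.iterate_succ_apply', Function.iterate_succ_apply']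
    have hlt : shiftDist (shiftMap^[n] x) (shiftMap^[n] y) < 1/2 :=
      lt_of_lt_of_le hd (min_le_right _ _)
    have := shift_dist_step _ _ hlt
    have hd2 : shiftDist (shiftMap^[n] x) (shiftMap^[n] y) < ε/2 :=
      lt_of_lt_of_le hd (min_le_left _ _)
    linarith
end

section
/- Let F = {f₁, f₂} be a multiple mapping on a compact metric space X. If F is Hausdorff metric sensitive and f₁ is the constant map f₁(x) = c for all x ∈ X, then f₂ is sensitive (as a single continuous self-map). -/
open Metric Set Filter

/-- `multiImage f₁ f₂ n x` is the set `Fⁿ(x) = {f_{i₁} ∘ ⋯ ∘ f_{iₙ}(x) : iⱼ ∈ {1,2}}`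
for the multiple mapping `F = {f₁, f₂}`. -/
def multiImage {X : Type*} (f₁ f₂ : X → X) : ℕ → X → Set X
  | 0, x => {x}
  | n + 1, x => multiImage f₁ f₂ n (f₁ x) ∪ multiImage f₁ f₂ n (f₂ x)

/-- Sensitivity of a single continuous self-map. -/
def Sensitive {X : Type*} [MetricSpace X] (f : X → X) : Prop :=
  ∃ δ > (0:ℝ), ∀ U : Set X, IsOpen U → U.Nonempty →
    ∃ x ∈ U, ∃ y ∈ U, ∃ n : ℕ, 1 ≤ n ∧ δ < dist (f^[n] x) (f^[n] y)

/-- Accessibility of a single continuous self-map. -/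
def Accessible {X : Type*} [MetricSpace X] (f : X → X) : Prop :=
  ∀ ε > (0:ℝ), ∀ U V : Set X, IsOpen U → IsOpen V → U.Nonempty → V.Nonempty →
    ∃ x ∈ U, ∃ y ∈ V, ∃ n : ℕ, 1 ≤ n ∧ dist (f^[n] x) (f^[n] y) < ε

/-- Hausdorff metric sensitivity of the multiple mapping `F = {f₁, f₂}`. -/
def HSensitive {X : Type*} [MetricSpace X] (f₁ f₂ : X → X) : Prop :=
  ∃ δ > (0:ℝ), ∀ U : Set X, IsOpen U → U.Nonempty →
    ∃ x ∈ U, ∃ y ∈ U, ∃ n : ℕ, 1 ≤ n ∧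
      δ < hausdorffDist (multiImage f₁ f₂ n x) (multiImage f₁ f₂ n y)

/-- Hausdorff metric accessibility of the multiple mapping `F = {f₁, f₂}`. -/
def HAccessible {X : Type*} [MetricSpace X] (f₁ f₂ : X → X) : Prop :=
  ∀ ε > (0:ℝ), ∀ U V : Set X, IsOpen U → IsOpen V → U.Nonempty → V.Nonempty →
    ∃ x ∈ U, ∃ y ∈ V, ∃ n : ℕ, 1 ≤ n ∧
      hausdorffDist (multiImage f₁ f₂ n x) (multiImage f₁ f₂ n y) < ε

lemma multiImage_const_eq {X : Type*} (f₁ f₂ : X → X) (c : X) (hc : ∀ x : X, f₁ x = c) :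
    ∀ n : ℕ, ∀ x : X,
      multiImage f₁ f₂ (n + 1) x = insert (f₂^[n+1] x) (multiImage f₁ f₂ n c) := by
  intro n
  induction n with
  | zero =>
    intro x
    show multiImage f₁ f₂ 0 (f₁ x) ∪ multiImage f₁ f₂ 0 (f₂ x) = _
    rw [hc x]
    show ({c} : Set X) ∪ {f₂ x} = _
    rw [Set.union_comm]
    rfl
  | succ n ih =>
    intro x
    have h1 : multiImage f₁ f₂ (n + 2) x
        = multiImage f₁ f₂ (n+1) c ∪ multiImage f₁ f₂ (n+1) (f₂ x) := by
      show multiImage f₁ f₂ (n+1) (f₁ x) ∪ _ = _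
      rw [hc x]
    rw [h1, ih (f₂ x), ih c]
    have h2 : multiImage f₁ f₂ n c ⊆ insert (f₂^[n+1] c) (multiImage f₁ f₂ n c) :=
      Set.subset_insert _ _
    rw [Function.iterate_succ_apply f₂ (n+1) x]
    ext z
    simp only [Set.mem_union, Set.mem_insert_iff]
    tauto

/-- If the multiple mapping `F = {f₁, f₂}` on a compact metric space is Hausdorff metric
sensitive and `f₁` is the constant map with value `c`, then `f₂` is sensitive. -/
theorem sensitive_of_hSensitive_const {X : Type*} [MetricSpace X] [CompactSpace X]
    (f₁ f₂ : X → X) (hf₁ : Continuous f₁) (hf₂ : Continuous f₂) (c : X)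
    (hc : ∀ x : X, f₁ x = c) (hF : HSensitive f₁ f₂) :
    Sensitive f₂ := by
  obtain ⟨δ, hδ, h⟩ := hF
  refine ⟨δ, hδ, fun U hU hUne => ?_⟩
  obtain ⟨x, hx, y, hy, n, hn, hd⟩ := h U hU hUne
  refine ⟨x, hx, y, hy, n, hn, lt_of_lt_of_le hd ?_⟩
  obtain ⟨m, rfl⟩ := Nat.exists_eq_add_of_le hn
  rw [add_comm] at *
  rw [multiImage_const_eq f₁ f₂ c hc m x, multiImage_const_eq f₁ f₂ c hc m y]
  apply Metric.hausdorffDist_le_of_mem_dist dist_nonneg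
  · intro z hz
    rcases hz with rfl | hz
    · exact ⟨f₂^[m+1] y, Set.mem_insert _ _, le_refl _⟩
    · exact ⟨z, Set.mem_insert_of_mem _ hz, by simpa using dist_nonneg⟩
  · intro z hz
    rcases hz with rfl | hz
    · exact ⟨f₂^[m+1] x, Set.mem_insert _ _, le_of_eq (dist_comm _ _)⟩
    · exact ⟨z, Set.mem_insert_of_mem _ hz, by simpa using dist_nonneg⟩
end

section
/- Let F = {f₁, f₂} be a multiple mapping on a compact metric space X with f₁(x) = c constant and f₂(c) = c. If f₂ is sensitive, then F is Hausdorff metric sensitive. -/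
open Metric Set Filter

lemma le_infDist_pair {X : Type*} [MetricSpace X] (b c a : X) {m : ℝ}
    (h1 : m ≤ dist b c) (h2 : m ≤ dist b a) : m ≤ Metric.infDist b {c, a} := by
  by_contra h
  rw [not_le] at h
  obtain ⟨z, hz, hlt⟩ := (Metric.infDist_lt_iff ⟨c, Set.mem_insert _ _⟩).mp h
  rcases hz with rfl | hz
  · exact absurd hlt (not_lt.mpr h1)
  · rw [Set.mem_singleton_iff] at hz; subst hz; exact absurd hlt (not_lt.mpr h2)

lemma multiImage_eq_pair {X : Type*} (f₁ f₂ : X → X) (c : X)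
    (hc : ∀ x : X, f₁ x = c) (hfix : f₂ c = c) :
    ∀ n : ℕ, 1 ≤ n → ∀ x : X, multiImage f₁ f₂ n x = {c, f₂^[n] x} := by
  intro n
  induction n with
  | zero => omega
  | succ n ih =>
    intro _ x
    rcases Nat.eq_zero_or_pos n with hn | hn
    · subst hn
      show ({f₁ x} : Set X) ∪ {f₂ x} = {c, f₂^[1] x}
      rw [hc x, Function.iterate_one, Set.singleton_union]
    · have h1 : multiImage f₁ f₂ (n+1) x
          = multiImage f₁ f₂ n (f₁ x) ∪ multiImage f₁ f₂ n (f₂ x) := rfl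
      rw [h1, ih hn, ih hn, hc x, Function.iterate_fixed hfix n,
        ← Function.iterate_succ_apply]
      ext z
      simp only [Set.mem_union, Set.mem_insert_iff, Set.mem_singleton_iff]
      tauto

/-- If `f₁` is constant with value `c`, `f₂ c = c`, and `f₂` is sensitive, then the
multiple mapping `F = {f₁, f₂}` is Hausdorff metric sensitive. -/
theorem hSensitive_of_sensitive {X : Type*} [MetricSpace X] [CompactSpace X]
    (f₁ f₂ : X → X) (hf₁ : Continuous f₁) (hf₂ : Continuous f₂) (c : X)
    (hc : ∀ x : X, f₁ x = c) (hfix : f₂ c = c) (hsen : Sensitive f₂) :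
    HSensitive f₁ f₂ := by
  obtain ⟨δ, hδ, hprop⟩ := hsen
  refine ⟨δ/2, by linarith, ?_⟩
  intro U hU hUne
  obtain ⟨x, hx, y, hy, n, hn, hd⟩ := hprop U hU hUne
  refine ⟨x, hx, y, hy, n, hn, ?_⟩
  rw [multiImage_eq_pair f₁ f₂ c hc hfix n hn x,
    multiImage_eq_pair f₁ f₂ c hc hfix n hn y]
  set a := f₂^[n] x
  set b := f₂^[n] y
  have hedist : EMetric.hausdorffEdist ({c, a} : Set X) ({c, b} : Set X) ≠ ⊤ :=
    Metric.hausdorffEdist_ne_top_of_nonempty_of_bounded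
      ⟨c, by simp⟩ ⟨c, by simp⟩
      (((Set.finite_singleton a).insert c).isBounded)
      (((Set.finite_singleton b).insert c).isBounded)
  have hsum : δ < dist a c + dist b c := by
    have := dist_triangle a c b
    have hbc : dist c b = dist b c := dist_comm c b
    linarith [hd, dist_triangle a c b, dist_comm c b ▸ (dist_triangle a c b)]
  rcases lt_or_ge (δ/2) (dist a c) with hac | hac
  · have h1 : δ/2 < Metric.infDist a ({c, b} : Set X) :=
      lt_of_lt_of_le (lt_min hac (by linarith))
        (le_infDist_pair a c b (min_le_left _ _) (min_le_right _ _))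
    calc δ/2 < Metric.infDist a ({c, b} : Set X) := h1
      _ ≤ Metric.hausdorffDist ({c, a} : Set X) ({c, b} : Set X) :=
        Metric.infDist_le_hausdorffDist_of_mem (by simp) hedist
  · have hbc : δ/2 < dist b c := by linarith
    have h1 : δ/2 < Metric.infDist b ({c, a} : Set X) :=
      lt_of_lt_of_le (lt_min hbc (by rw [dist_comm]; linarith))
        (le_infDist_pair b c a (min_le_left _ _) (min_le_right _ _))
    calc δ/2 < Metric.infDist b ({c, a} : Set X) := h1
      _ ≤ Metric.hausdorffDist ({c, b} : Set X) ({c, a} : Set X) :=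
        Metric.infDist_le_hausdorffDist_of_mem (by simp)
          (by rwa [EMetric.hausdorffEdist_comm])
      _ = Metric.hausdorffDist ({c, a} : Set X) ({c, b} : Set X) :=
        Metric.hausdorffDist_comm
end

section
/- Let F = {f₁, f₂} be a multiple mapping on a compact metric space X with f₁(x) = c constant and f₂(c) = c. If f₂ is accessible, then F is Hausdorff metric accessible. -/
open Metric Set Filter

/-- If `f₁` is constant with value `c`, `f₂ c = c`, and `f₂` is accessible, then the
multiple mapping `F = {f₁, f₂}` is Hausdorff metric accessible. -/
theorem hAccessible_of_accessible {X : Type*} [MetricSpace X] [CompactSpace X]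
    (f₁ f₂ : X → X) (hf₁ : Continuous f₁) (hf₂ : Continuous f₂) (c : X)
    (hc : ∀ x : X, f₁ x = c) (hfix : f₂ c = c) (hacc : Accessible f₂) :
    HAccessible f₁ f₂ := by
  have hcfix : ∀ n, multiImage f₁ f₂ n c = {c} := by
    intro n
    induction n with
    | zero => rfl
    | succ n ih => simp [multiImage, hc, hfix, ih]
  have key : ∀ n x, multiImage f₁ f₂ (n + 1) x = {c, f₂^[n+1] x} := by
    intro n
    induction n with
    | zero =>
      intro x
      show ({f₁ x} : Set X) ∪ {f₂ x} = _
      rw [hc x]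
      ext z; simp; tauto
    | succ n ih =>
      intro x
      show multiImage f₁ f₂ (n+1) (f₁ x) ∪ multiImage f₁ f₂ (n+1) (f₂ x) = _
      rw [hc x, ih (f₂ x), hcfix (n+1), Function.iterate_succ_apply]
      ext z; simp only [Set.mem_union, Set.mem_insert_iff, Set.mem_singleton_iff]; tauto
  intro ε hε U V hU hV hUne hVne
  obtain ⟨x, hx, y, hy, n, hn1, hd⟩ := hacc (ε/2) (by linarith) U V hU hV hUne hVne
  obtain ⟨m, rfl⟩ : ∃ m, n = m + 1 := ⟨n - 1, by omega⟩
  refine ⟨x, hx, y, hy, m + 1, by omega, ?_⟩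
  rw [key m x, key m y]
  have hle : hausdorffDist ({c, f₂^[m+1] x} : Set X) {c, f₂^[m+1] y}
      ≤ dist (f₂^[m+1] x) (f₂^[m+1] y) := by
    apply hausdorffDist_le_of_mem_dist dist_nonneg
    · intro z hz
      rcases hz with h | h
      · exact ⟨c, Set.mem_insert _ _, by rw [h, dist_self]; exact dist_nonneg⟩
      · rw [Set.mem_singleton_iff] at h
        exact ⟨f₂^[m+1] y, Set.mem_insert_of_mem _ rfl, by rw [h]⟩
    · intro z hz
      rcases hz with h | h
      · exact ⟨c, Set.mem_insert _ _, by rw [h, dist_self]; exact dist_nonneg⟩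
      · rw [Set.mem_singleton_iff] at h
        exact ⟨f₂^[m+1] x, Set.mem_insert_of_mem _ rfl,
          by rw [h]; exact (dist_comm _ _).le⟩
  linarith
end

section
/- Let F = {f₁, f₂} be a multiple mapping on a compact metric space X. Suppose there exists 0 < λ < 1 such that for any nonempty open sets U, V ⊆ X there exist x ∈ U and y ∈ V with d(fᵢ(x), fᵢ(y)) < λ·d(x,y) for i = 1,2. Then F is Hausdorff metric accessible. -/
open Metric Set Filter

/-- `multiImage` is always nonempty. -/
lemma multiImage_nonempty {X : Type*} (f₁ f₂ : X → X) :
    ∀ (n : ℕ) (x : X), (multiImage f₁ f₂ n x).Nonempty := by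
  intro n
  induction n with
  | zero => intro x; exact ⟨x, rfl⟩
  | succ n ih => intro x; exact (ih (f₁ x)).mono subset_union_left

/-- If both maps are `lam`-Lipschitz, each point of `Fⁿ x` has a partner in `Fⁿ y`
within `lam ^ n * dist x y`. -/
lemma multiImage_pairing {X : Type*} [MetricSpace X] (f₁ f₂ : X → X) (lam : ℝ)
    (hlam0 : 0 ≤ lam)
    (h1 : ∀ a b : X, dist (f₁ a) (f₁ b) ≤ lam * dist a b)
    (h2 : ∀ a b : X, dist (f₂ a) (f₂ b) ≤ lam * dist a b) :
    ∀ (n : ℕ) (x y : X), ∀ z ∈ multiImage f₁ f₂ n x,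
      ∃ w ∈ multiImage f₁ f₂ n y, dist z w ≤ lam ^ n * dist x y := by
  intro n
  induction n with
  | zero =>
    intro x y z hz
    rcases hz with rfl
    exact ⟨y, rfl, by simp⟩
  | succ n ih =>
    intro x y z hz
    rcases hz with hz | hz
    · rcases ih (f₁ x) (f₁ y) z hz with ⟨w, hw, hd⟩
      refine ⟨w, Or.inl hw, ?_⟩
      calc dist z w ≤ lam ^ n * dist (f₁ x) (f₁ y) := hd
        _ ≤ lam ^ n * (lam * dist x y) :=
            mul_le_mul_of_nonneg_left (h1 x y) (pow_nonneg hlam0 n)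
        _ = lam ^ (n + 1) * dist x y := by ring
    · rcases ih (f₂ x) (f₂ y) z hz with ⟨w, hw, hd⟩
      refine ⟨w, Or.inr hw, ?_⟩
      calc dist z w ≤ lam ^ n * dist (f₂ x) (f₂ y) := hd
        _ ≤ lam ^ n * (lam * dist x y) :=
            mul_le_mul_of_nonneg_left (h2 x y) (pow_nonneg hlam0 n)
        _ = lam ^ (n + 1) * dist x y := by ring

/-- If there is `0 < λ < 1` such that any pair of nonempty open sets contains points
`x, y` with `d(fᵢ x, fᵢ y) < λ · d(x, y)` for `i = 1, 2`, then the multiple mapping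
`F = {f₁, f₂}` is Hausdorff metric accessible. -/
theorem hAccessible_of_contraction_on_opens {X : Type*} [MetricSpace X] [CompactSpace X]
    (f₁ f₂ : X → X) (hf₁ : Continuous f₁) (hf₂ : Continuous f₂) (lam : ℝ)
    (hlam0 : 0 < lam) (hlam1 : lam < 1)
    (h : ∀ U V : Set X, IsOpen U → IsOpen V → U.Nonempty → V.Nonempty →
      ∃ x ∈ U, ∃ y ∈ V,
        dist (f₁ x) (f₁ y) < lam * dist x y ∧ dist (f₂ x) (f₂ y) < lam * dist x y) :
    HAccessible f₁ f₂ := by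
  -- Step 1: both maps are globally `lam`-Lipschitz.
  have key : ∀ a b : X, dist (f₁ a) (f₁ b) ≤ lam * dist a b ∧
      dist (f₂ a) (f₂ b) ≤ lam * dist a b := by
    intro a b
    have main : ∀ δ > (0:ℝ), dist (f₁ a) (f₁ b) ≤ lam * dist a b + δ ∧
        dist (f₂ a) (f₂ b) ≤ lam * dist a b + δ := by
      intro δ hδ
      -- continuity of f₁, f₂ at a and b
      obtain ⟨r1, hr1, H1⟩ := Metric.continuous_iff.1 hf₁ a (δ/4) (by linarith)
      obtain ⟨r2, hr2, H2⟩ := Metric.continuous_iff.1 hf₁ b (δ/4) (by linarith)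
      obtain ⟨r3, hr3, H3⟩ := Metric.continuous_iff.1 hf₂ a (δ/4) (by linarith)
      obtain ⟨r4, hr4, H4⟩ := Metric.continuous_iff.1 hf₂ b (δ/4) (by linarith)
      set r : ℝ := min (min r1 r2) (min (min r3 r4) (δ / (4 * lam))) with hrdef
      have hrpos : 0 < r := by
        apply lt_min (lt_min hr1 hr2) (lt_min (lt_min hr3 hr4) _)
        positivity
      obtain ⟨x, hx, y, hy, c1, c2⟩ := h (ball a r) (ball b r) isOpen_ball isOpen_ball
        ⟨a, mem_ball_self hrpos⟩ ⟨b, mem_ball_self hrpos⟩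
      have hxa : dist x a < r := hx
      have hyb : dist y b < r := hy
      have hxy : dist x y ≤ dist a b + 2 * r := by
        have := dist_triangle x a b
        have := dist_triangle4 x a b y
        have h1 : dist x y ≤ dist x a + dist a b + dist b y := dist_triangle4 x a b y
        have h2 : dist b y = dist y b := dist_comm b y
        linarith
      have hlr : lam * (2 * r) ≤ δ / 2 := by
        have hrle : r ≤ δ / (4 * lam) :=
          le_trans (min_le_right _ _) (min_le_right _ _)
        have : lam * (2 * r) ≤ lam * (2 * (δ / (4 * lam))) := by
          apply mul_le_mul_of_nonneg_left (by linarith) hlam0.le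
        calc lam * (2 * r) ≤ lam * (2 * (δ / (4 * lam))) := this
          _ = δ / 2 := by field_simp; ring
      constructor
      · have e1 : dist (f₁ x) (f₁ a) < δ/4 := H1 x (lt_of_lt_of_le hxa
          (le_trans (min_le_left _ _) (min_le_left _ _)))
        have e2 : dist (f₁ y) (f₁ b) < δ/4 := H2 y (lt_of_lt_of_le hyb
          (le_trans (min_le_left _ _) (min_le_right _ _)))
        have tri : dist (f₁ a) (f₁ b) ≤ dist (f₁ a) (f₁ x) + dist (f₁ x) (f₁ y)
            + dist (f₁ y) (f₁ b) := dist_triangle4 _ _ _ _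
        have hcomm : dist (f₁ a) (f₁ x) = dist (f₁ x) (f₁ a) := dist_comm _ _
        have hc : dist (f₁ x) (f₁ y) < lam * (dist a b + 2 * r) :=
          lt_of_lt_of_le c1 (mul_le_mul_of_nonneg_left hxy hlam0.le)
        have : lam * (dist a b + 2 * r) = lam * dist a b + lam * (2 * r) := by ring
        linarith
      · have e1 : dist (f₂ x) (f₂ a) < δ/4 := H3 x (lt_of_lt_of_le hxa
          (le_trans (min_le_right _ _) (le_trans (min_le_left _ _) (min_le_left _ _))))
        have e2 : dist (f₂ y) (f₂ b) < δ/4 := H4 y (lt_of_lt_of_le hyb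
          (le_trans (min_le_right _ _) (le_trans (min_le_left _ _) (min_le_right _ _))))
        have tri : dist (f₂ a) (f₂ b) ≤ dist (f₂ a) (f₂ x) + dist (f₂ x) (f₂ y)
            + dist (f₂ y) (f₂ b) := dist_triangle4 _ _ _ _
        have hcomm : dist (f₂ a) (f₂ x) = dist (f₂ x) (f₂ a) := dist_comm _ _
        have hc : dist (f₂ x) (f₂ y) < lam * (dist a b + 2 * r) :=
          lt_of_lt_of_le c2 (mul_le_mul_of_nonneg_left hxy hlam0.le)
        have : lam * (dist a b + 2 * r) = lam * dist a b + lam * (2 * r) := by ring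
        linarith
    constructor
    · exact le_of_forall_pos_le_add fun δ hδ => (main δ hδ).1
    · exact le_of_forall_pos_le_add fun δ hδ => (main δ hδ).2
  have h1 : ∀ a b : X, dist (f₁ a) (f₁ b) ≤ lam * dist a b := fun a b => (key a b).1
  have h2 : ∀ a b : X, dist (f₂ a) (f₂ b) ≤ lam * dist a b := fun a b => (key a b).2
  -- Step 2: conclude.
  intro ε hε U V hU hV ⟨x, hx⟩ ⟨y, hy⟩
  have pairing := multiImage_pairing f₁ f₂ lam hlam0.le h1 h2
  -- choose n with lam^n * dist x y < ε and 1 ≤ n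
  have htend : Tendsto (fun n : ℕ => lam ^ n * dist x y) atTop (nhds 0) := by
    have := (tendsto_pow_atTop_nhds_zero_of_lt_one hlam0.le hlam1).mul_const (dist x y)
    simpa using this
  obtain ⟨n, hn1, hnε⟩ := ((eventually_ge_atTop 1).and
    (htend.eventually_lt_const hε)).exists
  refine ⟨x, hx, y, hy, n, hn1, lt_of_le_of_lt ?_ hnε⟩
  apply hausdorffDist_le_of_mem_dist
  · positivity
  · exact pairing n x y
  · intro z hz
    rcases pairing n y x z hz with ⟨w, hw, hd⟩
    exact ⟨w, hw, by rwa [dist_comm x y]⟩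
end

section
/- Let F = {f₁, f₂} be a multiple mapping on a compact metric space X with f₁ constant equal to c, f₂(c) = c, and f₂ Kato chaotic. Then F is Hausdorff metric Kato chaotic. -/
open Metric Set Filter

private lemma multiImage_c {X : Type*} (f₁ f₂ : X → X) (c : X)
    (hc : ∀ x : X, f₁ x = c) (hfix : f₂ c = c) :
    ∀ n, multiImage f₁ f₂ n c = {c} := by
  intro n
  induction n with
  | zero => rfl
  | succ n ih => simp [multiImage, hc, hfix, ih]

private lemma multiImage_eq {X : Type*} (f₁ f₂ : X → X) (c : X)
    (hc : ∀ x : X, f₁ x = c) (hfix : f₂ c = c) :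
    ∀ n x, multiImage f₁ f₂ (n + 1) x = {c, f₂^[n + 1] x} := by
  intro n
  induction n with
  | zero =>
    intro x
    simp only [multiImage, hc]
    ext z
    simp [Set.mem_insert_iff]; tauto
  | succ n ih =>
    intro x
    show multiImage f₁ f₂ (n + 1) (f₁ x) ∪ multiImage f₁ f₂ (n + 1) (f₂ x) = _
    rw [hc, multiImage_c f₁ f₂ c hc hfix, ih (f₂ x)]
    rw [Function.iterate_succ_apply, Function.iterate_succ_apply,
      Function.iterate_succ_apply]
    ext z
    simp [Set.mem_insert_iff]; tauto

private lemma pair_infDist_ge {X : Type*} [MetricSpace X] (a c b : X) :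
    min (dist a c) (dist a b) ≤ infDist a ({c, b} : Set X) := by
  by_contra h
  push_neg at h
  rcases (infDist_lt_iff (by simp : ({c, b} : Set X).Nonempty)).1 h with ⟨y, hy, hd⟩
  rcases hy with rfl | hy
  · exact absurd hd (not_lt.2 (min_le_left _ _))
  · rw [Set.mem_singleton_iff] at hy
    subst hy
    exact absurd hd (not_lt.2 (min_le_right _ _))

/-- If `f₁` is constant with value `c`, `f₂ c = c`, and `f₂` is Kato chaotic
(sensitive and accessible), then `F = {f₁, f₂}` is Hausdorff metric Kato chaotic. -/
theorem hKato_of_kato {X : Type*} [MetricSpace X] [CompactSpace X]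
    (f₁ f₂ : X → X) (hf₁ : Continuous f₁) (hf₂ : Continuous f₂) (c : X)
    (hc : ∀ x : X, f₁ x = c) (hfix : f₂ c = c)
    (hKato : Sensitive f₂ ∧ Accessible f₂) :
    HSensitive f₁ f₂ ∧ HAccessible f₁ f₂ := by
  obtain ⟨⟨δ, hδ, hsen⟩, hacc⟩ := hKato
  have hmi := multiImage_eq f₁ f₂ c hc hfix
  have hBnd : ∀ s : Set X, Bornology.IsBounded s := fun s =>
    (isCompact_univ.isBounded).subset (Set.subset_univ s)
  have hfin : ∀ a b : X, EMetric.hausdorffEdist ({c, a} : Set X) ({c, b} : Set X) ≠ ⊤ := by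
    intro a b
    exact hausdorffEdist_ne_top_of_nonempty_of_bounded (by simp) (by simp) (hBnd _) (hBnd _)
  constructor
  · -- HSensitive with δ/2
    refine ⟨δ / 2, by linarith, fun U hU hUne => ?_⟩
    obtain ⟨x, hx, y, hy, n, hn, hd⟩ := hsen U hU hUne
    refine ⟨x, hx, y, hy, n, hn, ?_⟩
    obtain ⟨m, rfl⟩ : ∃ m, n = m + 1 := ⟨n - 1, (Nat.succ_pred_eq_of_pos hn).symm⟩
    rw [hmi m x, hmi m y]
    set a := f₂^[m + 1] x
    set b := f₂^[m + 1] y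
    have htri : δ < dist a c + dist b c := by
      have := dist_triangle a c b
      rw [dist_comm c b] at this
      linarith [hd.trans_le this]
    rcases lt_or_ge (δ / 2) (dist a c) with hca | hca
    · -- use point a ∈ {c, a}
      have h1 : δ / 2 < min (dist a c) (dist a b) :=
        lt_min hca (by linarith [hd])
      calc δ / 2 < min (dist a c) (dist a b) := h1
        _ ≤ infDist a ({c, b} : Set X) := pair_infDist_ge a c b
        _ ≤ hausdorffDist ({c, a} : Set X) ({c, b} : Set X) :=
          infDist_le_hausdorffDist_of_mem (by simp) (hfin a b)
    · have hcb : δ / 2 < dist b c := by linarith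
      have h1 : δ / 2 < min (dist b c) (dist b a) := by
        rw [dist_comm b a]
        exact lt_min hcb (by linarith [hd])
      calc δ / 2 < min (dist b c) (dist b a) := h1
        _ ≤ infDist b ({c, a} : Set X) := pair_infDist_ge b c a
        _ ≤ hausdorffDist ({c, b} : Set X) ({c, a} : Set X) :=
          infDist_le_hausdorffDist_of_mem (by simp) (hfin b a)
        _ = hausdorffDist ({c, a} : Set X) ({c, b} : Set X) := hausdorffDist_comm
  · -- HAccessible
    intro ε hε U V hU hV hUne hVne
    obtain ⟨x, hx, y, hy, n, hn, hd⟩ := hacc ε hε U V hU hV hUne hVne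
    refine ⟨x, hx, y, hy, n, hn, ?_⟩
    obtain ⟨m, rfl⟩ : ∃ m, n = m + 1 := ⟨n - 1, (Nat.succ_pred_eq_of_pos hn).symm⟩
    rw [hmi m x, hmi m y]
    set a := f₂^[m + 1] x
    set b := f₂^[m + 1] y
    have hle : hausdorffDist ({c, a} : Set X) ({c, b} : Set X) ≤ dist a b := by
      apply hausdorffDist_le_of_mem_dist dist_nonneg
      · intro w hw
        rcases hw with h | h
        · exact ⟨c, Set.mem_insert _ _, by rw [h]; simp [dist_nonneg]⟩
        · rw [Set.mem_singleton_iff] at h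
          exact ⟨b, by simp, by rw [h]⟩
      · intro w hw
        rcases hw with h | h
        · exact ⟨c, Set.mem_insert _ _, by rw [h]; simp [dist_nonneg]⟩
        · rw [Set.mem_singleton_iff] at h
          exact ⟨a, by simp, by rw [h, dist_comm]⟩
    exact hle.trans_lt hd
end

section
/- Let (X, F) and (Y, G) be multiple-mapping dynamical systems on compact metric spaces, topologically conjugate via a homeomorphism T : X → Y satisfying T(F(x)) = G(T(x)) for all x ∈ X (as sets). Then F is Hausdorff metric sensitive if and only if G is Hausdorff metric sensitive. -/
open Metric Set Filter

lemma image_multiImage {X Y : Type*} [TopologicalSpace X] [TopologicalSpace Y] (f₁ f₂ : X → X) (g₁ g₂ : Y → Y) (T : X ≃ₜ Y)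
    (hconj : ∀ x : X, T '' {f₁ x, f₂ x} = {g₁ (T x), g₂ (T x)}) :
    ∀ (n : ℕ) (x : X), T '' multiImage f₁ f₂ n x = multiImage g₁ g₂ n (T x) := by
  intro n
  induction n with
  | zero => intro x; simp [multiImage]
  | succ n ih =>
    intro x
    have hpair : ({T (f₁ x), T (f₂ x)} : Set Y) = {g₁ (T x), g₂ (T x)} := by
      rw [← Set.image_pair]; exact hconj x
    rcases Set.pair_eq_pair_iff.1 hpair with ⟨h1, h2⟩ | ⟨h1, h2⟩
    · simp only [multiImage, Set.image_union, ih, h1, h2]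
    · simp only [multiImage, Set.image_union, ih, h1, h2]
      exact Set.union_comm _ _

lemma hSensitive_of_conj {X Y : Type*} [MetricSpace X] [CompactSpace X]
    [MetricSpace Y] [CompactSpace Y]
    (f₁ f₂ : X → X) (g₁ g₂ : Y → Y) (T : X ≃ₜ Y)
    (hconj : ∀ x : X, T '' {f₁ x, f₂ x} = {g₁ (T x), g₂ (T x)})
    (hG : ∃ δ > (0:ℝ), ∀ U : Set Y, IsOpen U → U.Nonempty →
      ∃ x ∈ U, ∃ y ∈ U, ∃ n : ℕ, 1 ≤ n ∧
        δ < hausdorffDist (multiImage g₁ g₂ n x) (multiImage g₁ g₂ n y)) :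
    ∃ δ > (0:ℝ), ∀ U : Set X, IsOpen U → U.Nonempty →
      ∃ x ∈ U, ∃ y ∈ U, ∃ n : ℕ, 1 ≤ n ∧
        δ < hausdorffDist (multiImage f₁ f₂ n x) (multiImage f₁ f₂ n y) := by
  obtain ⟨δ, hδ, hsens⟩ := hG
  have hT : UniformContinuous (T : X → Y) :=
    CompactSpace.uniformContinuous_of_continuous T.continuous
  obtain ⟨ε, hε, hTε⟩ := Metric.uniformContinuous_iff.1 hT δ hδ
  have key : ∀ (A B : Set X), A.Nonempty → B.Nonempty →
      hausdorffDist A B ≤ ε / 2 → hausdorffDist (T '' A) (T '' B) ≤ δ := by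
    intro A B hA hB hAB
    have hlt : hausdorffDist A B < ε := lt_of_le_of_lt hAB (by linarith)
    apply hausdorffDist_le_of_mem_dist hδ.le
    · rintro _ ⟨a, ha, rfl⟩
      obtain ⟨b, hb, hab⟩ := exists_dist_lt_of_hausdorffDist_lt ha hlt
        (Metric.hausdorffEdist_ne_top_of_nonempty_of_bounded hA hB
          isBounded_of_compactSpace isBounded_of_compactSpace)
      exact ⟨T b, Set.mem_image_of_mem _ hb, (hTε hab).le⟩
    · rintro _ ⟨b, hb, rfl⟩
      obtain ⟨a, ha, hab⟩ := exists_dist_lt_of_hausdorffDist_lt' hb hlt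
        (Metric.hausdorffEdist_ne_top_of_nonempty_of_bounded hA hB
          isBounded_of_compactSpace isBounded_of_compactSpace)
      exact ⟨T a, Set.mem_image_of_mem _ ha, by rw [dist_comm]; exact (hTε hab).le⟩
  refine ⟨ε / 2, by linarith, ?_⟩
  intro U hU hUne
  have hTU : IsOpen ((T : X → Y) '' U) := T.isOpenMap U hU
  obtain ⟨y₁, hy₁, y₂, hy₂, n, hn, hdist⟩ := hsens _ hTU (hUne.image _)
  obtain ⟨x₁, hx₁, rfl⟩ := hy₁
  obtain ⟨x₂, hx₂, rfl⟩ := hy₂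
  refine ⟨x₁, hx₁, x₂, hx₂, n, hn, ?_⟩
  by_contra h
  push_neg at h
  have := key _ _ (multiImage_nonempty f₁ f₂ n x₁) (multiImage_nonempty f₁ f₂ n x₂) h
  rw [image_multiImage f₁ f₂ g₁ g₂ T hconj, image_multiImage f₁ f₂ g₁ g₂ T hconj] at this
  linarith

theorem hSensitive_iff_of_conj' {X Y : Type*} [MetricSpace X] [CompactSpace X]
    [MetricSpace Y] [CompactSpace Y]
    (f₁ f₂ : X → X) (g₁ g₂ : Y → Y)
    (T : X ≃ₜ Y) (hconj : ∀ x : X, T '' {f₁ x, f₂ x} = {g₁ (T x), g₂ (T x)}) :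
    (∃ δ > (0:ℝ), ∀ U : Set X, IsOpen U → U.Nonempty →
      ∃ x ∈ U, ∃ y ∈ U, ∃ n : ℕ, 1 ≤ n ∧
        δ < hausdorffDist (multiImage f₁ f₂ n x) (multiImage f₁ f₂ n y)) ↔
    (∃ δ > (0:ℝ), ∀ U : Set Y, IsOpen U → U.Nonempty →
      ∃ x ∈ U, ∃ y ∈ U, ∃ n : ℕ, 1 ≤ n ∧
        δ < hausdorffDist (multiImage g₁ g₂ n x) (multiImage g₁ g₂ n y)) := by
  have hconj' : ∀ y : Y, T.symm '' {g₁ y, g₂ y} = {f₁ (T.symm y), f₂ (T.symm y)} := by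
    intro y
    have := hconj (T.symm y)
    rw [T.apply_symm_apply] at this
    rw [← this, ← Set.image_comp]
    simp [Function.comp]
  constructor
  · exact fun h => hSensitive_of_conj g₁ g₂ f₁ f₂ T.symm hconj' h
  · exact fun h => hSensitive_of_conj f₁ f₂ g₁ g₂ T hconj h

/-- Topological conjugacy preserves the relevant Hausdorff-metric chaotic property of
multiple mappings. -/
theorem hSensitive_iff_of_conj {X Y : Type*} [MetricSpace X] [CompactSpace X]
    [MetricSpace Y] [CompactSpace Y]
    (f₁ f₂ : X → X) (hf₁ : Continuous f₁) (hf₂ : Continuous f₂)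
    (g₁ g₂ : Y → Y) (hg₁ : Continuous g₁) (hg₂ : Continuous g₂)
    (T : X ≃ₜ Y) (hconj : ∀ x : X, T '' {f₁ x, f₂ x} = {g₁ (T x), g₂ (T x)}) :
    HSensitive f₁ f₂ ↔ HSensitive g₁ g₂ :=
  hSensitive_iff_of_conj' f₁ f₂ g₁ g₂ T hconj
end

section
/- Consider the multiple mapping F = {f₁, f₂} on X = {0,1,2} (with the discrete/standard metric), where f₁ is the cyclic permutation 0→1→2→0 and f₂ is the cyclic permutation 0→2→1→0. Then for every x ∈ X and every n ≥ 2, Fⁿ(x) = X; consequently F is Hausdorff metric accessible, while neither f₁ nor f₂ is accessible. -/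
open Metric Set Filter

/-- On a three-point metric space `X = {a, b, c}`, with `f₁ : a→b→c→a` and
`f₂ : a→c→b→a` the two cyclic permutations, one has `Fⁿ(x) = X` for every `x` and
`n ≥ 2`; consequently `F` is Hausdorff metric accessible, while neither `f₁` nor
`f₂` is accessible. -/
theorem threePoint_example {X : Type*} [MetricSpace X] (a b c : X)
    (hab : a ≠ b) (hac : a ≠ c) (hbc : b ≠ c)
    (huniv : (Set.univ : Set X) = {a, b, c})
    (f₁ f₂ : X → X)
    (h₁a : f₁ a = b) (h₁b : f₁ b = c) (h₁c : f₁ c = a)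
    (h₂a : f₂ a = c) (h₂c : f₂ c = b) (h₂b : f₂ b = a) :
    (∀ x : X, ∀ n : ℕ, 2 ≤ n → multiImage f₁ f₂ n x = Set.univ) ∧
      HAccessible f₁ f₂ ∧ ¬ Accessible f₁ ∧ ¬ Accessible f₂ := by
  -- every point is a, b, or c
  have hc : ∀ x : X, x = a ∨ x = b ∨ x = c := by
    intro x
    have : x ∈ ({a, b, c} : Set X) := huniv ▸ Set.mem_univ x
    simpa using this
  -- Fⁿ(x) = univ for n ≥ 2
  have h2 : ∀ x : X, multiImage f₁ f₂ 2 x = Set.univ := by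
    intro x
    rcases hc x with rfl | rfl | rfl <;>
    · rw [huniv]
      show multiImage f₁ f₂ 1 _ ∪ multiImage f₁ f₂ 1 _ = _
      show (multiImage f₁ f₂ 0 _ ∪ multiImage f₁ f₂ 0 _) ∪
        (multiImage f₁ f₂ 0 _ ∪ multiImage f₁ f₂ 0 _) = _
      show ({_} ∪ {_}) ∪ ({_} ∪ {_}) = _
      simp only [h₁a, h₁b, h₁c, h₂a, h₂b, h₂c]
      ext z; simp; tauto
  have hmain : ∀ x : X, ∀ n : ℕ, 2 ≤ n → multiImage f₁ f₂ n x = Set.univ := by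
    intro x n hn
    induction n, hn using Nat.le_induction generalizing x with
    | base => exact h2 x
    | succ n hn ih =>
      show multiImage f₁ f₂ n (f₁ x) ∪ multiImage f₁ f₂ n (f₂ x) = _
      rw [ih (f₁ x), ih (f₂ x), Set.univ_union]
  -- minimal positive distance
  set δ := min (min (dist a b) (dist a c)) (dist b c) with hδdef
  have hδ : 0 < δ :=
    lt_min (lt_min (dist_pos.2 hab) (dist_pos.2 hac)) (dist_pos.2 hbc)
  have key : ∀ x y : X, x ≠ y → δ ≤ dist x y := by
    intro x y hxy
    rcases hc x with rfl | rfl | rfl <;> rcases hc y with rfl | rfl | rfl <;>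
      first
      | exact absurd rfl hxy
      | exact (min_le_left _ _).trans (min_le_left _ _)
      | exact (min_le_left _ _).trans (min_le_right _ _)
      | exact min_le_right _ _
      | (rw [dist_comm]
         first
         | exact (min_le_left _ _).trans (min_le_left _ _)
         | exact (min_le_left _ _).trans (min_le_right _ _)
         | exact min_le_right _ _)
  -- all sets are open
  have huf : (Set.univ : Set X).Finite := by
    rw [huniv]; exact (Set.finite_singleton c).insert b |>.insert a
  have hopen : ∀ s : Set X, IsOpen s := by
    intro s
    have : IsClosed sᶜ := (huf.subset (Set.subset_univ _)).isClosed
    exact isClosed_compl_iff.mp this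
  -- injectivity of f₁ and f₂
  have hinj₁ : Function.Injective f₁ := by
    have : Function.LeftInverse (f₁ ∘ f₁) f₁ := by
      intro x; rcases hc x with rfl | rfl | rfl <;>
        simp [h₁a, h₁b, h₁c]
    exact this.injective
  have hinj₂ : Function.Injective f₂ := by
    have : Function.LeftInverse (f₂ ∘ f₂) f₂ := by
      intro x; rcases hc x with rfl | rfl | rfl <;>
        simp [h₂a, h₂b, h₂c]
    exact this.injective
  have notacc : ∀ f : X → X, Function.Injective f → ¬ Accessible f := by
    intro f hinj hA
    obtain ⟨x, hx, y, hy, n, -, hd⟩ :=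
      hA δ hδ {a} {b} (hopen _) (hopen _) ⟨a, rfl⟩ ⟨b, rfl⟩
    rw [Set.mem_singleton_iff] at hx hy
    subst hx; subst hy
    have : f^[n] x ≠ f^[n] y := fun h => hab (hinj.iterate n h)
    exact absurd hd (not_lt.2 (key _ _ this))
  refine ⟨hmain, ?_, notacc f₁ hinj₁, notacc f₂ hinj₂⟩
  intro ε hε U V _ _ ⟨x, hx⟩ ⟨y, hy⟩
  refine ⟨x, hx, y, hy, 2, one_le_two, ?_⟩
  rw [hmain x 2 le_rfl, hmain y 2 le_rfl, Metric.hausdorffDist_self_zero]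
  exact hε
end

section
/- Let f₁(x) = 2x on [0,1/2], 2−2x on (1/2,1] (the tent map) and f₂(x) = 1−2x on [0,1/2], 2x−1 on (1/2,1]. Then for every x ∈ [0,1] and n ≥ 1, Fⁿ(x) = {f₁ⁿ(x), f₂ⁿ(x)} and f₁ⁿ(x) + f₂ⁿ(x) = 1, where Fⁿ(x) = {f_{i₁}∘⋯∘f_{iₙ}(x) : iⱼ ∈ {1,2}}. -/
open Metric Set Filter

/-- The tent map `f₁` on `[0,1]`. -/
noncomputable def tent : ℝ → ℝ := fun x => if x ≤ 1/2 then 2 * x else 2 - 2 * x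

/-- `f₂(x) = 1 - 2x` on `[0,1/2]` and `2x - 1` on `(1/2,1]`. -/
noncomputable def coTent : ℝ → ℝ := fun x => if x ≤ 1/2 then 1 - 2 * x else 2 * x - 1

lemma coTent_eq (x : ℝ) : coTent x = 1 - tent x := by
  unfold tent coTent; split <;> ring

lemma tent_symm (x : ℝ) : tent (1 - x) = tent x := by
  unfold tent
  rcases lt_trichotomy x (1/2) with h | h | h
  · rw [if_neg (by linarith), if_pos (by linarith)]; ring
  · subst h; norm_num
  · rw [if_pos (by linarith), if_neg (by linarith)]; ring

lemma coTent_iter (n : ℕ) (hn : 1 ≤ n) (x : ℝ) :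
    coTent^[n] x = 1 - tent^[n] x := by
  induction n with
  | zero => omega
  | succ n ih =>
    rcases Nat.eq_or_lt_of_le hn with h | h
    · simp [← h, coTent_eq]
    · have hn' : 1 ≤ n := by omega
      rw [Function.iterate_succ_apply', Function.iterate_succ_apply',
        ih hn', coTent_eq, tent_symm]

lemma tent_iter_symm (n : ℕ) (hn : 1 ≤ n) (x : ℝ) :
    tent^[n] (1 - x) = tent^[n] x := by
  obtain ⟨m, rfl⟩ := Nat.exists_eq_add_of_le hn
  rw [add_comm, Function.iterate_add_apply, Function.iterate_add_apply,
    Function.iterate_one, tent_symm]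

lemma multiImage_tent (n : ℕ) (hn : 1 ≤ n) (x : ℝ) :
    multiImage tent coTent n x = {tent^[n] x, 1 - tent^[n] x} := by
  induction n generalizing x with
  | zero => omega
  | succ n ih =>
    rcases Nat.eq_or_lt_of_le hn with h | h
    · obtain rfl : n = 0 := by omega
      simp [multiImage, coTent_eq, Set.pair_comm]
    · have hn' : 1 ≤ n := by omega
      show multiImage tent coTent n (tent x) ∪ multiImage tent coTent n (coTent x) = _
      rw [ih hn', ih hn', coTent_eq, tent_iter_symm n hn',
        ← Function.iterate_succ_apply, Set.union_self]

/-- For every `x ∈ [0,1]` and `n ≥ 1`: `Fⁿ(x) = {f₁ⁿ(x), f₂ⁿ(x)}` and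
`f₁ⁿ(x) + f₂ⁿ(x) = 1`, where `F = {f₁, f₂}` with `f₁` the tent map and
`f₂ = 1 - f₁`. -/
theorem tent_coTent_multiImage :
    ∀ x ∈ Set.Icc (0:ℝ) 1, ∀ n : ℕ, 1 ≤ n →
      multiImage tent coTent n x = {tent^[n] x, coTent^[n] x} ∧
        tent^[n] x + coTent^[n] x = 1 := by
  intro x _ n hn
  refine ⟨?_, ?_⟩
  · rw [multiImage_tent n hn, coTent_iter n hn]
  · rw [coTent_iter n hn]; ring
end
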